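/- For every integer t ≥ 3, the polynomial w₂^{2^t−3} + w₂^{2^{t−2}−2}·g_{2^t+2^{t−1}−2} belongs to w₃I_{2^t+2^{t−1}}. -/
import Mathlib


open MvPolynomial Finset

noncomputable section

/-- `R2 = (ℤ/2)[w₂, w₃]`, the polynomial ring in two variables over `ℤ/2ℤ`. -/
abbrev R2 : Type := MvPolynomial (Fin 2) (ZMod 2)

/-- The variable `w₂`. -/
def w2 : R2 := X 0

/-- The variable `w₃`. -/
def w3 : R2 := X 1

/-- The polynomials `g_r`: `g₀ = 1`, `g₁ = 0`, `g₂ = w₂`,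
`g_{r+3} = w₂ g_{r+1} + w₃ g_r`. -/
def g : ℕ → R2
  | 0 => 1
  | 1 => 0
  | 2 => w2
  | (r+3) => w2 * g (r+1) + w3 * g r

/-- The ideal `I_n = (g_{n-2}, g_{n-1}, g_n)`. -/
def I (n : ℕ) : Ideal R2 := Ideal.span {g (n-2), g (n-1), g n}

/- ----------  auxiliary lemmas  ---------- -/

lemma h2 : (2 : R2) = 0 := by simpa using CharP.cast_eq_zero R2 2

lemma g_rec (r : ℕ) : g (r+3) = w2 * g (r+1) + w3 * g r := rfl

lemma frob (x y : R2) : (x + y)^2 = x^2 + y^2 := by linear_combination x*y*h2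

/-- Joint statement for the doubling identities. -/
lemma gAB (s : ℕ) :
    g (2*s+3) = w3 * (g s)^2 ∧ g (2*s+2) = w2 * (g s)^2 + (g (s+1))^2 := by
  have key : ∀ s, (g (2*s+3) = w3 * (g s)^2 ∧ g (2*s+2) = w2 * (g s)^2 + (g (s+1))^2)
      ∧ (g (2*(s+1)+3) = w3 * (g (s+1))^2 ∧
         g (2*(s+1)+2) = w2 * (g (s+1))^2 + (g (s+2))^2) := by
    intro s
    induction s with
    | zero =>
      refine ⟨⟨?_, ?_⟩, ?_, ?_⟩
      · show g 3 = w3 * (g 0)^2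
        rw [show (3:ℕ) = 0+3 from rfl, g_rec]
        show w2 * 0 + w3 * 1 = w3 * 1^2; ring
      · show g 2 = w2 * (g 0)^2 + (g 1)^2
        show w2 = w2 * 1^2 + 0^2; ring
      · show g 5 = w3 * (g 1)^2
        rw [show (5:ℕ) = 2+3 from rfl, g_rec, show (2+1 : ℕ) = 0+3 from rfl, g_rec]
        show w2 * (w2 * 0 + w3 * 1) + w3 * w2 = w3 * 0^2
        linear_combination w2*w3*h2
      · show g 4 = w2 * (g 1)^2 + (g 2)^2
        rw [show (4:ℕ) = 1+3 from rfl, g_rec]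
        show w2 * w2 + w3 * 0 = w2 * 0^2 + w2^2; ring
    | succ n ih =>
      obtain ⟨⟨hA1, hB1⟩, hA2, hB2⟩ := ih
      refine ⟨⟨hA2, hB2⟩, ?_, ?_⟩
      · show g (2*n+7) = w3 * (g (n+2))^2
        rw [show 2*n+7 = (2*n+4)+3 from by ring, g_rec,
          show (2*n+4)+1 = 2*(n+1)+3 from by ring, hA2,
          show 2*n+4 = 2*(n+1)+2 from by ring, hB2]
        linear_combination w2*w3*(g (n+1))^2*h2
      · show g (2*n+6) = w2 * (g (n+2))^2 + (g (n+3))^2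
        rw [show 2*n+6 = (2*n+3)+3 from by ring, g_rec,
          show (2*n+3)+1 = 2*(n+1)+2 from by ring, hB2, hA1, g_rec n]
        linear_combination (-(w2*w3*(g (n+1))*(g n)))*h2
  exact (key s).1

lemma gA (s : ℕ) : g (2*s+3) = w3 * (g s)^2 := (gAB s).1
lemma gB (s : ℕ) : g (2*s+2) = w2 * (g s)^2 + (g (s+1))^2 := (gAB s).2

lemma I_eq (a : ℕ) : I (a+2) = Ideal.span {g a, g (a+1), g (a+2)} := by
  simp [I]

lemma mem1 (a : ℕ) : g a ∈ I (a+2) := by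
  rw [I_eq]; exact Ideal.subset_span (by simp)
lemma mem2 (a : ℕ) : g (a+1) ∈ I (a+2) := by
  rw [I_eq]; exact Ideal.subset_span (by simp)
lemma mem3 (a : ℕ) : g (a+2) ∈ I (a+2) := by
  rw [I_eq]; exact Ideal.subset_span (by simp)

/-- Key squaring lemma: `p ∈ I (a+2) → w3 * p^2 ∈ I (2a+4)`. -/
lemma sq_mem (a : ℕ) (p : R2) (hp : p ∈ I (a+2)) : w3 * p^2 ∈ I (2*a+4) := by
  rw [I_eq] at hp
  obtain ⟨x, w, hw, rfl⟩ := Ideal.mem_span_insert.mp hp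
  obtain ⟨y, z', hz, rfl⟩ := Ideal.mem_span_insert.mp hw
  obtain ⟨z, rfl⟩ := Ideal.mem_span_singleton.mp hz
  have m1 : w3 * (g a)^2 ∈ I (2*a+4) := by
    rw [← gA a, show 2*a+3 = (2*a+2)+1 from by ring,
      show 2*a+4 = (2*a+2)+2 from by ring]
    exact mem2 _
  have m2 : w3 * (g (a+1))^2 ∈ I (2*a+4) := by
    have h5 : g (2*a+5) = w3 * (g (a+1))^2 := by
      rw [show 2*a+5 = 2*(a+1)+3 from by ring]; exact gA (a+1)
    rw [← h5, show 2*a+5 = (2*a+2)+3 from by ring, g_rec]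
    refine Ideal.add_mem _ (Ideal.mul_mem_left _ _ ?_) (Ideal.mul_mem_left _ _ ?_)
    · rw [show 2*a+4 = (2*a+2)+2 from by ring]
      exact mem2 _
    · rw [show 2*a+4 = (2*a+2)+2 from by ring]; exact mem1 _
  have m3 : w3 * (g (a+2))^2 ∈ I (2*a+4) := by
    have h7 : g (2*a+7) = w3 * (g (a+2))^2 := by
      rw [show 2*a+7 = 2*(a+2)+3 from by ring]; exact gA (a+2)
    rw [← h7, show 2*a+7 = (2*a+4)+3 from by ring, g_rec]
    refine Ideal.add_mem _ (Ideal.mul_mem_left _ _ ?_) (Ideal.mul_mem_left _ _ ?_)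
    · rw [show (2*a+4)+1 = (2*a+2)+3 from by ring, g_rec]
      refine Ideal.add_mem _ (Ideal.mul_mem_left _ _ ?_) (Ideal.mul_mem_left _ _ ?_)
      · rw [show 2*a+4 = (2*a+2)+2 from by ring]
        exact mem2 _
      · rw [show 2*a+4 = (2*a+2)+2 from by ring]; exact mem1 _
    · rw [show 2*a+4 = (2*a+2)+2 from by ring]; exact mem3 _
  have key : w3 * (x * g a + (y * g (a+1) + g (a+2) * z))^2
      = x^2 * (w3 * (g a)^2) + y^2 * (w3 * (g (a+1))^2) + z^2 * (w3 * (g (a+2))^2) := by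
    linear_combination (w3 * (x * g a * (y * g (a+1)) + x * g a * (g (a+2) * z)
      + y * g (a+1) * (g (a+2) * z))) * h2
  rw [key]
  exact Ideal.add_mem _ (Ideal.add_mem _ (Ideal.mul_mem_left _ _ m1)
    (Ideal.mul_mem_left _ _ m2)) (Ideal.mul_mem_left _ _ m3)

/-- The quotient polynomials `q_s` with `w3 * q_s = w2^(2^(s+3)-3) + w2^(2^(s+1)-2) g (3·2^(s+2)-2)`. -/
def qq : ℕ → R2
  | 0 => 0
  | (s+1) => w2^3 * w3 * (qq s)^2 + w2^(4*2^s-2) * w3 * (g (6*2^s-2))^4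

lemma qq_succ (s : ℕ) :
    qq (s+1) = w2^3 * w3 * (qq s)^2 + w2^(4*2^s-2) * w3 * (g (6*2^s-2))^4 := rfl

lemma g4 : g 4 = w2^2 := by
  have h := gB 1
  rw [show (2*1+2 : ℕ) = 4 from rfl, show (1+1 : ℕ) = 2 from rfl,
    show g 1 = 0 from rfl, show g 2 = w2 from rfl] at h
  rw [h]; ring

lemma g5 : g 5 = 0 := by
  have h := gA 1
  rw [show (2*1+3 : ℕ) = 5 from rfl, show g 1 = 0 from rfl] at h
  rw [h]; ring

lemma g10 : g 10 = w2^5 := by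
  have h := gB 4
  rw [show (2*4+2 : ℕ) = 10 from rfl, g4, show (4+1 : ℕ) = 5 from rfl, g5] at h
  rw [h]; ring

lemma Tmem (s : ℕ) : w2^(4*2^s-2) * w3 * (g (6*2^s-2))^4 ∈ I (24*2^s) := by
  induction s with
  | zero =>
    have e : w2^(4*2^0-2) * w3 * (g (6*2^0-2))^4 = g 23 := by
      rw [show (6*2^0-2 : ℕ) = 4 from rfl, g4, show (23:ℕ) = 2*10+3 from rfl, gA 10, g10]
      norm_num; ring
    rw [e, show (23:ℕ) = 22+1 from rfl, show (24*2^0:ℕ) = 22+2 from rfl]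
    exact mem2 22
  | succ s ih =>
    obtain ⟨c, hc⟩ : ∃ c, 2^s = c+1 := ⟨2^s - 1, by have := Nat.one_le_two_pow (n := s); omega⟩
    have hps : (2:ℕ)^(s+1) = 2^s*2 := pow_succ 2 s
    rw [show 4*2^(s+1)-2 = 8*c+6 from by omega, show 6*2^(s+1)-2 = 12*c+10 from by omega,
      show 24*2^(s+1) = 48*c+48 from by omega]
    rw [show 4*2^s-2 = 4*c+2 from by omega, show 6*2^s-2 = 6*c+4 from by omega,
      show 24*2^s = 24*c+22+2 from by omega] at ih
    have hp := sq_mem _ _ ih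
    rw [show 2*(24*c+22)+4 = 48*c+48 from by ring] at hp
    have hE := gA (24*c+22)
    rw [show 2*(24*c+22)+3 = 48*c+47 from by ring] at hE
    have hF := gB (12*c+10)
    rw [show 2*(12*c+10)+2 = 24*c+22 from by ring,
      show 12*c+10+1 = 12*c+11 from by ring] at hF
    have hD := gA (6*c+4)
    rw [show 2*(6*c+4)+3 = 12*c+11 from by ring] at hD
    have key : w2^(8*c+6) * w3 * (g (12*c+10))^4
        = w2^(8*c+4) * g (48*c+47)
          + w3^2 * (w3 * (w2^(4*c+2) * w3 * (g (6*c+4))^4)^2) := by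
      rw [hE, hF, hD]
      linear_combination (-(w2^(8*c+5)*w3^3*(g (12*c+10))^2*(g (6*c+4))^4
        + w2^(8*c+4)*w3^5*(g (6*c+4))^8)) * h2
    rw [key]
    refine Ideal.add_mem _ (Ideal.mul_mem_left _ _ ?_) (Ideal.mul_mem_left _ _ hp)
    have := mem2 (48*c+46)
    rwa [show 48*c+46+1 = 48*c+47 from by ring, show 48*c+46+2 = 48*c+48 from by ring] at this

lemma qmem (s : ℕ) : qq s ∈ I (12*2^s) := by
  induction s with
  | zero => rw [show qq 0 = 0 from rfl]; exact Ideal.zero_mem _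
  | succ s ih =>
    obtain ⟨c, hc⟩ : ∃ c, 2^s = c+1 := ⟨2^s - 1, by have := Nat.one_le_two_pow (n := s); omega⟩
    have hps : (2:ℕ)^(s+1) = 2^s*2 := pow_succ 2 s
    rw [qq_succ]
    rw [show 12*2^(s+1) = 24*2^s from by omega]
    refine Ideal.add_mem _ ?_ (Tmem s)
    rw [show 12*2^s = 12*c+10+2 from by omega] at ih
    have hp := sq_mem _ _ ih
    rw [show 2*(12*c+10)+4 = 24*2^s from by omega] at hp
    have e : w2^3 * w3 * (qq s)^2 = w2^3 * (w3 * (qq s)^2) := by ring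
    rw [e]
    exact Ideal.mul_mem_left _ _ hp

lemma qid (s : ℕ) : w3 * qq s = w2^(8*2^s-3) + w2^(2*2^s-2) * g (12*2^s-2) := by
  induction s with
  | zero =>
    rw [show qq 0 = 0 from rfl, show 8*2^0-3 = 5 from rfl, show 2*2^0-2 = 0 from rfl,
      show 12*2^0-2 = 10 from rfl, g10]
    linear_combination (-(w2^5)) * h2
  | succ s ih =>
    obtain ⟨c, hc⟩ : ∃ c, 2^s = c+1 := ⟨2^s - 1, by have := Nat.one_le_two_pow (n := s); omega⟩
    have hps : (2:ℕ)^(s+1) = 2^s*2 := pow_succ 2 s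
    rw [show 8*2^(s+1)-3 = 16*c+13 from by omega, show 2*2^(s+1)-2 = 4*c+2 from by omega,
      show 12*2^(s+1)-2 = 24*c+22 from by omega]
    rw [show 8*2^s-3 = 8*c+5 from by omega, show 2*2^s-2 = 2*c from by omega,
      show 12*2^s-2 = 12*c+10 from by omega] at ih
    have hF := gB (12*c+10)
    rw [show 2*(12*c+10)+2 = 24*c+22 from by ring,
      show 12*c+10+1 = 12*c+11 from by ring] at hF
    have hD := gA (6*c+4)
    rw [show 2*(6*c+4)+3 = 12*c+11 from by ring] at hD
    have hsq : (w3 * qq s)^2 = w2^(16*c+10) + w2^(4*c) * (g (12*c+10))^2 := by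
      rw [ih, frob]; ring
    rw [qq_succ, show 4*2^s-2 = 4*c+2 from by omega, show 6*2^s-2 = 6*c+4 from by omega,
      hF, hD]
    linear_combination w2^3 * hsq

/-- Theorem 4.6: for `t ≥ 3`,
`w₂^{2^t-3} + w₂^{2^{t-2}-2} g_{2^t+2^{t-1}-2} ∈ w₃I_{2^t+2^{t-1}}`. -/
theorem thm_4_6 (t : ℕ) (ht : 3 ≤ t) :
    ∃ q ∈ I (2 ^ t + 2 ^ (t - 1)),
      w2 ^ (2 ^ t - 3) + w2 ^ (2 ^ (t - 2) - 2) * g (2 ^ t + 2 ^ (t - 1) - 2) = w3 * q := by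
  obtain ⟨s, rfl⟩ : ∃ s, t = s+3 := ⟨t-3, by omega⟩
  have h8 : (2:ℕ)^(s+3) = 8*2^s := by ring
  have h4 : (2:ℕ)^(s+3-1) = 4*2^s := by rw [show s+3-1 = s+2 from rfl]; ring
  have h2' : (2:ℕ)^(s+3-2) = 2*2^s := by rw [show s+3-2 = s+1 from rfl]; ring
  refine ⟨qq s, ?_, ?_⟩
  · rw [show 2^(s+3) + 2^(s+3-1) = 12*2^s from by omega]
    exact qmem s
  · rw [show 2^(s+3) + 2^(s+3-1) - 2 = 12*2^s-2 from by omega,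
      show 2^(s+3) - 3 = 8*2^s-3 from by omega,
      show 2^(s+3-2) - 2 = 2*2^s-2 from by omega]
    exact (qid s).symm

end
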